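/- For every n ≥ 1, the composite GW(F) → K^MW_0(F) → K^MW_{-n}(F) (where the second map is multiplication by ηⁿ) factors through the Witt ring W(F) = GW(F)/(h), and the induced map φ_{-n} : W(F) → K^MW_{-n}(F) is an isomorphism of abelian groups; moreover φ₀ : GW(F) → K^MW_0(F) is an isomorphism. -/

import Mathlib

noncomputable section

/-- Generators of the Milnor–Witt K-theory ring: a symbol `[u]` for each unit `u`
and the element `η`. -/
inductive MWGen (F : Type) [Field F] : Type
  | of : Fˣ → MWGen F
  | eta : MWGen F

/-- The defining relations KMW1–KMW4 of Milnor–Witt K-theory, imposed on the free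
(noncommutative) ℤ-algebra on the generators. -/
inductive MWRel (F : Type) [Field F] :
    FreeAlgebra ℤ (MWGen F) → FreeAlgebra ℤ (MWGen F) → Prop
  | steinberg (a : Fˣ) (h1 : (a : F) ≠ 1) :
      MWRel F
        (FreeAlgebra.ι ℤ (MWGen.of a) *
          FreeAlgebra.ι ℤ (MWGen.of (Units.mk0 (1 - (a : F)) (sub_ne_zero_of_ne h1.symm))))
        0
  | mul_rel (a b : Fˣ) :
      MWRel F (FreeAlgebra.ι ℤ (MWGen.of (a * b)))
        (FreeAlgebra.ι ℤ (MWGen.of a) + FreeAlgebra.ι ℤ (MWGen.of b) +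
          FreeAlgebra.ι ℤ MWGen.eta * FreeAlgebra.ι ℤ (MWGen.of a) *
            FreeAlgebra.ι ℤ (MWGen.of b))
  | comm_rel (u : Fˣ) :
      MWRel F (FreeAlgebra.ι ℤ MWGen.eta * FreeAlgebra.ι ℤ (MWGen.of u))
        (FreeAlgebra.ι ℤ (MWGen.of u) * FreeAlgebra.ι ℤ MWGen.eta)
  | hyp :
      MWRel F
        (FreeAlgebra.ι ℤ MWGen.eta *
          (FreeAlgebra.ι ℤ MWGen.eta * FreeAlgebra.ι ℤ (MWGen.of (-1)) + 2))
        0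

/-- The Milnor–Witt K-theory ring `K^MW_*(F)` (all degrees together). -/
def KMW (F : Type) [Field F] : Type := RingQuot (MWRel F)

instance (F : Type) [Field F] : Ring (KMW F) := inferInstanceAs (Ring (RingQuot (MWRel F)))

/-- The symbol `[u] ∈ K^MW_1(F)`. -/
def mw {F : Type} [Field F] (u : Fˣ) : KMW F :=
  RingQuot.mkRingHom (MWRel F) (FreeAlgebra.ι ℤ (MWGen.of u))

/-- The element `η ∈ K^MW_{-1}(F)`. -/
def mweta (F : Type) [Field F] : KMW F :=
  RingQuot.mkRingHom (MWRel F) (FreeAlgebra.ι ℤ MWGen.eta)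

/-- The degree-`n` homogeneous component of `K^MW_*(F)`: the additive subgroup spanned
by the monomials `η^m [u₁]⋯[u_r]` with `r - m = n`. -/
def KMWcomp (F : Type) [Field F] (n : ℤ) : AddSubgroup (KMW F) :=
  AddSubgroup.closure {x | ∃ (m r : ℕ) (v : Fin r → Fˣ),
    (r : ℤ) - (m : ℤ) = n ∧ x = (mweta F) ^ m * (List.ofFn fun i => mw (v i)).prod}

/-- The defining relations of the Grothendieck–Witt ring `GW(F)`, presented as a
commutative ring with generators `⟨u⟩` for `u ∈ Fˣ`: the additive relations
GW1–GW3 together with multiplicativity of the symbols. -/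
inductive GWRel (F : Type) [Field F] :
    MvPolynomial Fˣ ℤ → MvPolynomial Fˣ ℤ → Prop
  | sq (u v : Fˣ) : GWRel F (MvPolynomial.X (u * v ^ 2)) (MvPolynomial.X u)
  | hyp (u : Fˣ) :
      GWRel F (MvPolynomial.X u + MvPolynomial.X (-u))
        (1 + MvPolynomial.X (-1 : Fˣ))
  | add (u v : Fˣ) (h : (u : F) + (v : F) ≠ 0) :
      GWRel F (MvPolynomial.X u + MvPolynomial.X v)
        (MvPolynomial.X (Units.mk0 ((u : F) + (v : F)) h) +
          MvPolynomial.X (Units.mk0 ((u : F) + (v : F)) h * u * v))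
  | mul (u v : Fˣ) :
      GWRel F (MvPolynomial.X u * MvPolynomial.X v) (MvPolynomial.X (u * v))
  | one : GWRel F (MvPolynomial.X (1 : Fˣ)) 1

/-- The Grothendieck–Witt ring `GW(F)` of the field `F`, via its presentation. -/
def GW (F : Type) [Field F] : Type := RingQuot (GWRel F)

instance (F : Type) [Field F] : CommRing (GW F) :=
  inferInstanceAs (CommRing (RingQuot (GWRel F)))

/-- The generator `⟨u⟩ ∈ GW(F)`. -/
def gw {F : Type} [Field F] (u : Fˣ) : GW F :=
  RingQuot.mkRingHom (GWRel F) (MvPolynomial.X u)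

/-- The hyperbolic element `h = 1 + ⟨-1⟩ ∈ GW(F)`. -/
def hGW (F : Type) [Field F] : GW F := 1 + gw (-1 : Fˣ)

/-- The Witt ring `W(F) := GW(F)/(h)`. -/
def WittRing (F : Type) [Field F] : Type := GW F ⧸ Ideal.span {hGW F}

instance (F : Type) [Field F] : CommRing (WittRing F) :=
  inferInstanceAs (CommRing (GW F ⧸ Ideal.span {hGW F}))

/-- The quotient map `GW(F) → W(F)`. -/
def wq (F : Type) [Field F] : GW F →+* WittRing F :=
  Ideal.Quotient.mk (Ideal.span {hGW F})

/-! The assignment `⟨u⟩ ↦ 1 + η[u]` satisfies the relations of `GW(F)` inside `K^MW_*(F)`, which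
gives `φ₀`, and `η^(r+n) [u₁]⋯[u_r] = φ₀(∏ (⟨uᵢ⟩ - 1)) ηⁿ` shows that `x ↦ φ₀(x) ηⁿ` maps onto
the component of degree `-n`. Injectivity is detected by two ring maps out of `K^MW_*(F)`: the
realization `K^MW_*(F) → W(F)[T, T⁻¹]`, `η ↦ T⁻¹`, `[u] ↦ T (⟨u⟩ - 1)`, which sends `φ₀(x) ηⁿ`
to `x̄ T⁻ⁿ`, and the augmentation to `ℤ` killing `η` and every `[u]`, which restricts to the rank
on `GW(F)`. For `n ≥ 1` this realization alone gives injectivity on `W(F)`, through which the map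
factors since `φ₀(h) η = 0`; for `n = 0` one adds that `h x = rank(x) h` in `GW(F)`, so the
kernel of `GW(F) → W(F)` meets that of the rank only in `0`. -/

theorem Subring.closure_image_eq_top {R S : Type*} [Ring R] [Ring S] {f : R →+* S}
    (hf : Function.Surjective f) {s : Set R} (hs : Subring.closure s = ⊤) :
    Subring.closure (f '' s) = ⊤ := by
  rw [← RingHom.map_closure, hs, ← RingHom.range_eq_map, RingHom.range_eq_top_of_surjective f hf]

theorem Subring.closure_eq_top_of_adjoin_int_eq_top {R : Type*} [Ring R] {s : Set R}
    (hs : Algebra.adjoin ℤ s = ⊤) : Subring.closure s = ⊤ := by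
  rw [Algebra.adjoin_int] at hs
  exact (congrArg Subalgebra.toSubring hs).trans Algebra.top_toSubring

theorem LaurentPolynomial.C_injective {R : Type*} [Semiring R] :
    Function.Injective (LaurentPolynomial.C : R →+* LaurentPolynomial R) := fun a b h ↦ by
  simpa using congrArg (fun p : LaurentPolynomial R ↦ p.coeff 0) h

theorem LaurentPolynomial.T_neg_one_mul_T_one {R : Type*} [Semiring R] :
    (LaurentPolynomial.T (-1) * LaurentPolynomial.T 1 : LaurentPolynomial R) = 1 := by
  rw [← LaurentPolynomial.T_add, neg_add_cancel, LaurentPolynomial.T_zero]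

variable {F : Type} [Field F]

theorem MonoidHom.add_eq_of_sub_one_mul_sub_one_eq_zero {R : Type*} [Ring R] (s : Fˣ →* R)
    (hsq : ∀ u, s (u * u) = 1) (hst : ∀ a b : Fˣ, (a : F) + b = 1 → (s a - 1) * (s b - 1) = 0)
    (u v : Fˣ) (h : (u : F) + v ≠ 0) :
    s u + s v = s (Units.mk0 ((u : F) + v) h) + s (Units.mk0 ((u : F) + v) h * u * v) := by
  set w := Units.mk0 ((u : F) + v) h
  have hw : (u * w⁻¹ : Fˣ) + ((v * w⁻¹ : Fˣ) : F) = 1 := by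
    simp [w, ← add_mul, mul_inv_cancel₀ h]
  have key := congrArg (s w * ·) (hst _ _ hw)
  simp only [mul_sub, sub_mul, mul_one, one_mul, mul_zero, ← map_mul] at key
  have hwuv : s (w * (u * w⁻¹ * (v * w⁻¹))) = s (w * u * v) := by
    rw [← mul_one (s (w * (u * w⁻¹ * (v * w⁻¹)))), ← hsq w, ← map_mul]
    congr 1
    ext
    simp only [Units.val_mul, Units.val_inv_eq_inv_val]
    field_simp
  rw [hwuv, mul_inv_cancel_comm_assoc, mul_inv_cancel_comm_assoc] at key
  rw [← sub_eq_zero, ← neg_eq_zero, ← key]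
  abel

theorem KMW.closure_insert_mweta_range_mw :
    Subring.closure (insert (mweta F) (Set.range mw)) = ⊤ := by
  have : insert (mweta F) (Set.range mw) =
      RingQuot.mkRingHom (MWRel F) '' Set.range (FreeAlgebra.ι ℤ) := by
    rw [← Set.range_comp]
    ext x
    constructor
    · rintro (rfl | ⟨u, rfl⟩)
      exacts [⟨MWGen.eta, rfl⟩, ⟨MWGen.of u, rfl⟩]
    · rintro ⟨_ | _, rfl⟩
      exacts [Or.inr ⟨_, rfl⟩, Or.inl rfl]
  rw [this]
  exact Subring.closure_image_eq_top (RingQuot.mkRingHom_surjective _)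
    (Subring.closure_eq_top_of_adjoin_int_eq_top (FreeAlgebra.adjoin_range_ι ℤ (MWGen F)))

theorem GW.closure_range_gw : Subring.closure (Set.range (gw (F := F))) = ⊤ := by
  rw [show Set.range (gw (F := F)) = RingQuot.mkRingHom (GWRel F) '' Set.range MvPolynomial.X from
    Set.range_comp _ _]
  exact Subring.closure_image_eq_top (RingQuot.mkRingHom_surjective _)
    (Subring.closure_eq_top_of_adjoin_int_eq_top MvPolynomial.adjoin_range_X)

theorem GW.ringHom_ext {R : Type*} [Ring R] {f g : GW F →+* R} (h : ∀ u, f (gw u) = g (gw u)) :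
    f = g :=
  RingHom.eq_of_eqOn_set_dense GW.closure_range_gw (by rintro _ ⟨u, rfl⟩; exact h u)

namespace KMW

variable {R : Type*} [Ring R]

def lift (e : R) (s : Fˣ → R) (hst : ∀ a b : Fˣ, (a : F) + b = 1 → s a * s b = 0)
    (hmul : ∀ a b, s (a * b) = s a + s b + e * s a * s b) (hcomm : ∀ u, e * s u = s u * e)
    (hhyp : e * (e * s (-1) + 2) = 0) : KMW F →+* R :=
  RingQuot.lift ⟨(FreeAlgebra.lift ℤ (fun g : MWGen F ↦ MWGen.rec s e g)).toRingHom, by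
    rintro x y (⟨a, ha⟩ | ⟨a, b⟩ | u | _) <;>
      simp only [AlgHom.toRingHom_eq_coe, RingHom.coe_coe, map_mul, map_add, map_zero, map_ofNat,
        FreeAlgebra.lift_ι_apply]
    · exact hst _ _ (by simp)
    · exact hmul a b
    · exact hcomm u
    · exact hhyp⟩

variable {e : R} {s : Fˣ → R} {hst : ∀ a b : Fˣ, (a : F) + b = 1 → s a * s b = 0}
    {hmul : ∀ a b, s (a * b) = s a + s b + e * s a * s b} {hcomm : ∀ u, e * s u = s u * e}
    {hhyp : e * (e * s (-1) + 2) = 0}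

@[simp]
theorem lift_mw (u : Fˣ) : lift e s hst hmul hcomm hhyp (mw u) = s u :=
  (RingQuot.lift_mkRingHom_apply _ _ _).trans (FreeAlgebra.lift_ι_apply _ _)

@[simp]
theorem lift_mweta : lift e s hst hmul hcomm hhyp (mweta F) = e :=
  (RingQuot.lift_mkRingHom_apply _ _ _).trans (FreeAlgebra.lift_ι_apply _ _)

end KMW

namespace GW

variable {R : Type*} [CommRing R]

def lift (s : Fˣ →* R) (hsq : ∀ u, s (u * u) = 1) (hhyp : ∀ u, s u + s (-u) = 1 + s (-1))
    (hadd : ∀ (u v : Fˣ) (h : (u : F) + v ≠ 0),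
      s u + s v = s (Units.mk0 ((u : F) + v) h) + s (Units.mk0 ((u : F) + v) h * u * v)) :
    GW F →+* R :=
  RingQuot.lift ⟨MvPolynomial.eval₂Hom (Int.castRingHom R) s, by
    rintro x y (⟨u, v⟩ | u | ⟨u, v, h⟩ | ⟨u, v⟩ | _) <;>
      simp only [MvPolynomial.eval₂Hom_X', map_add, map_mul, map_one]
    · rw [pow_two, hsq, mul_one]
    · exact hhyp u
    · simpa only [map_mul] using hadd u v h⟩

variable {s : Fˣ →* R} {hsq : ∀ u, s (u * u) = 1} {hhyp : ∀ u, s u + s (-u) = 1 + s (-1)}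
    {hadd : ∀ (u v : Fˣ) (h : (u : F) + v ≠ 0),
      s u + s v = s (Units.mk0 ((u : F) + v) h) + s (Units.mk0 ((u : F) + v) h * u * v)}

@[simp]
theorem lift_gw (u : Fˣ) : lift s hsq hhyp hadd (gw u) = s u :=
  (RingQuot.lift_mkRingHom_apply _ _ _).trans (MvPolynomial.eval₂Hom_X' _ _ _)

end GW

theorem commute_mweta (x : KMW F) : Commute (mweta F) x := by
  have hcomm : ∀ u : Fˣ, mweta F * mw u = mw u * mweta F := fun u ↦ by
    have h := RingQuot.mkRingHom_rel (MWRel.comm_rel (F := F) u)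
    simp only [map_mul] at h
    exact h
  have : (⊤ : Subring (KMW F)) ≤ Subring.centralizer {mweta F} := by
    rw [← KMW.closure_insert_mweta_range_mw, Subring.closure_le]
    rintro _ (rfl | ⟨u, rfl⟩) _ rfl
    exacts [rfl, hcomm u]
  exact Subring.mem_centralizer_iff.mp (this trivial) _ rfl

theorem mw_mul (a b : Fˣ) : mw (a * b) = mw a + mw b + mweta F * mw a * mw b := by
  have h := RingQuot.mkRingHom_rel (MWRel.mul_rel (F := F) a b)
  simp only [map_add, map_mul] at h
  exact h

theorem mweta_mul_mweta_mul_mw_neg_one : mweta F * (mweta F * mw (-1 : Fˣ)) = -(2 * mweta F) := by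
  have h := RingQuot.mkRingHom_rel (MWRel.hyp (F := F))
  simp only [map_add, map_mul, map_ofNat, map_zero] at h
  change mweta F * (mweta F * mw (-1 : Fˣ) + 2) = 0 at h
  rw [mul_add] at h
  rw [eq_neg_of_add_eq_zero_left h, mul_two, two_mul]

theorem mw_mul_mw_of_add_eq_one {a b : Fˣ} (hab : (a : F) + b = 1) : mw a * mw b = 0 := by
  have ha : (a : F) ≠ 1 := fun h ↦ b.ne_zero (by linear_combination hab - h)
  have h := RingQuot.mkRingHom_rel (MWRel.steinberg (F := F) a ha)
  simp only [map_mul, map_zero] at h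
  rwa [show b = Units.mk0 (1 - (a : F)) (sub_ne_zero.mpr ha.symm) from
    Units.ext (eq_sub_of_add_eq' hab)]

theorem mw_one : mw (1 : Fˣ) = 0 := by
  have hη : mweta F * mw (1 : Fˣ) = 0 := by
    have h := congrArg (mweta F * ·) (mw_mul (-1 : Fˣ) (-1))
    simp only [neg_mul_neg, one_mul] at h
    rw [h]
    calc _ = mweta F * mw (-1 : Fˣ) * 2 + mweta F * (mweta F * mw (-1 : Fˣ)) * mw (-1 : Fˣ) := by
          noncomm_ring
      _ = 0 := by rw [mweta_mul_mweta_mul_mw_neg_one]; noncomm_ring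
  have h := mw_mul (1 : Fˣ) 1
  rw [one_mul, hη, zero_mul, add_zero, left_eq_add] at h
  exact h

variable (F) in
def mwForm : Fˣ →* KMW F where
  toFun u := 1 + mweta F * mw u
  map_one' := by rw [mw_one, mul_zero, add_zero]
  map_mul' u v := by
    rw [mw_mul]
    have := (commute_mweta (mw u)).eq
    calc 1 + mweta F * (mw u + mw v + mweta F * mw u * mw v)
        = 1 + mweta F * mw u + mweta F * mw v + mweta F * (mw u * mweta F) * mw v := by
          rw [← this]; noncomm_ring
      _ = (1 + mweta F * mw u) * (1 + mweta F * mw v) := by noncomm_ring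

theorem mwForm_apply (u : Fˣ) : mwForm F u = 1 + mweta F * mw u := rfl

theorem mw_mul_eq_add_mwForm_mul (a b : Fˣ) : mw (a * b) = mw a + mwForm F a * mw b := by
  rw [mw_mul, mwForm_apply]; noncomm_ring

theorem mw_mul_eq_add_mul_mwForm (a b : Fˣ) : mw (a * b) = mw b + mw a * mwForm F b := by
  rw [mw_mul, mwForm_apply, mul_add, ← mul_assoc, ← (commute_mweta _).eq]; noncomm_ring

theorem mw_inv_eq_neg_mwForm_mul (a : Fˣ) : mw a⁻¹ = -(mwForm F a⁻¹ * mw a) := by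
  have h := mw_mul_eq_add_mwForm_mul a⁻¹ a
  rw [inv_mul_cancel, mw_one] at h
  exact eq_neg_of_add_eq_zero_left h.symm

theorem mw_inv_eq_neg_mul_mwForm (a : Fˣ) : mw a⁻¹ = -(mw a * mwForm F a⁻¹) := by
  have h := mw_mul_eq_add_mul_mwForm a a⁻¹
  rw [mul_inv_cancel, mw_one] at h
  exact eq_neg_of_add_eq_zero_left h.symm

theorem mw_mul_mw_inv_of_mul_eq_zero {a b : Fˣ} (h : mw a * mw b = 0) : mw a * mw b⁻¹ = 0 := by
  rw [mw_inv_eq_neg_mul_mwForm, mul_neg, ← mul_assoc, h, zero_mul, neg_zero]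

theorem mw_inv_mul_mw_of_mul_eq_zero {a b : Fˣ} (h : mw a * mw b = 0) : mw a⁻¹ * mw b = 0 := by
  rw [mw_inv_eq_neg_mwForm_mul, neg_mul, mul_assoc, h, mul_zero, neg_zero]

theorem mw_mul_mw_mul_of_mul_eq_zero {a b c : Fˣ} (hb : mw a * mw b = 0) (hc : mw a * mw c = 0) :
    mw a * mw (b * c) = 0 := by
  rw [mw_mul_eq_add_mul_mwForm, mul_add, hc, ← mul_assoc, hb, zero_mul, add_zero]

theorem mw_mul_mw_neg (a : Fˣ) : mw a * mw (-a) = 0 := by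
  by_cases ha : a = 1
  · rw [ha, mw_one, zero_mul]
  have ha' : (a : F) ≠ 1 := fun h ↦ ha (Units.ext h)
  have hb : (1 : F) - (a : F)⁻¹ ≠ 0 := sub_ne_zero.mpr fun h ↦ ha' (inv_eq_one.mp h.symm)
  set b := Units.mk0 (1 - (a : F)) (sub_ne_zero.mpr ha'.symm)
  set c := Units.mk0 (1 - (a : F)⁻¹) hb
  -- Steinberg kills `[a][1 - a]` and `[a⁻¹][1 - a⁻¹]`, and `-a = (1 - a) (1 - a⁻¹)⁻¹`.
  have hneg : -a = b * c⁻¹ := by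
    ext
    simp only [Units.val_neg, Units.val_mul, Units.val_inv_eq_inv_val, Units.val_mk0, b, c]
    have : (a : F) - 1 ≠ 0 := sub_ne_zero.mpr ha'
    field_simp
    ring
  have hab : mw a * mw b = 0 := mw_mul_mw_of_add_eq_one (by simp [b])
  have hac : mw a * mw c = 0 := by
    simpa using mw_inv_mul_mw_of_mul_eq_zero
      (mw_mul_mw_of_add_eq_one (a := a⁻¹) (b := c) (by simp [c]))
  rw [hneg]
  exact mw_mul_mw_mul_of_mul_eq_zero hab (mw_mul_mw_inv_of_mul_eq_zero hac)

theorem mw_mul_self (a : Fˣ) : mw a * mw a = mw (-1 : Fˣ) * mw a := by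
  have h : mw a = mw (-1 : Fˣ) + mwForm F (-1) * mw (-a) := by
    rw [← mw_mul_eq_add_mwForm_mul, neg_one_mul, neg_neg]
  have h' : mw (-a) * mw a = 0 := by simpa using mw_mul_mw_neg (-a)
  nth_rw 1 [h]
  rw [add_mul, mul_assoc, h', mul_zero, add_zero]

theorem mweta_mul_mw_mul_self (a : Fˣ) : mweta F * mw (a * a) = 0 := by
  rw [mw_mul, mul_assoc _ (mw a), mw_mul_self]
  calc _ = 2 * (mweta F * mw a) + mweta F * (mweta F * mw (-1 : Fˣ)) * mw a := by noncomm_ring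
    _ = 0 := by rw [mweta_mul_mweta_mul_mw_neg_one]; noncomm_ring

theorem mwForm_mul_self (a : Fˣ) : mwForm F (a * a) = 1 := by
  rw [mwForm_apply, mweta_mul_mw_mul_self, add_zero]

theorem one_add_mwForm_neg_one_mul_mweta : (1 + mwForm F (-1)) * mweta F = 0 := by
  have h := (commute_mweta (mweta F * mw (-1 : Fˣ))).eq
  calc _ = 2 * mweta F + mweta F * mw (-1 : Fˣ) * mweta F := by rw [mwForm_apply]; noncomm_ring
    _ = 0 := by rw [← h, mweta_mul_mweta_mul_mw_neg_one]; noncomm_ring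

theorem mwForm_add_mwForm_neg (a : Fˣ) : mwForm F a + mwForm F (-a) = 1 + mwForm F (-1) := by
  calc mwForm F a + mwForm F (-a) = (1 + mwForm F (-1)) * mwForm F a := by
        rw [← neg_one_mul a, map_mul, add_mul, one_mul]
    _ = 1 + mwForm F (-1) := by
        rw [mwForm_apply a, mul_add, ← mul_assoc, one_add_mwForm_neg_one_mul_mweta, zero_mul,
          mul_one, add_zero]

theorem mwForm_sub_one_mul_mwForm_sub_one {a b : Fˣ} (hab : (a : F) + b = 1) :
    (mwForm F a - 1) * (mwForm F b - 1) = 0 := by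
  simp only [mwForm_apply, add_sub_cancel_left]
  rw [mul_assoc, ← mul_assoc (mw a), ← (commute_mweta _).eq, mul_assoc,
    mw_mul_mw_of_add_eq_one hab, mul_zero, mul_zero]

theorem gw_mul (a b : Fˣ) : gw a * gw b = gw (a * b) := by
  have h := RingQuot.mkRingHom_rel (GWRel.mul (F := F) a b)
  simp only [map_mul] at h
  exact h

theorem gw_one : gw (1 : Fˣ) = 1 := by
  have h := RingQuot.mkRingHom_rel (GWRel.one (F := F))
  simp only [map_one] at h
  exact h

theorem gw_add_gw_neg (a : Fˣ) : gw a + gw (-a) = hGW F := by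
  have h := RingQuot.mkRingHom_rel (GWRel.hyp (F := F) a)
  simp only [map_add, map_one] at h
  exact h

theorem gw_add_gw (a b : Fˣ) (h : (a : F) + b ≠ 0) :
    gw a + gw b = gw (Units.mk0 ((a : F) + b) h) + gw (Units.mk0 ((a : F) + b) h * a * b) := by
  have h := RingQuot.mkRingHom_rel (GWRel.add (F := F) a b h)
  simp only [map_add] at h
  exact h

theorem gw_sub_one_mul_gw_sub_one {a b : Fˣ} (hab : (a : F) + b = 1) :
    (gw a - 1) * (gw b - 1) = 0 := by
  have h := gw_add_gw a b (by simp [hab])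
  rw [show Units.mk0 ((a : F) + b) (by simp [hab]) = 1 from Units.ext hab, gw_one, one_mul] at h
  linear_combination gw_mul a b - h

theorem hGW_mul_gw (a : Fˣ) : hGW F * gw a = hGW F := by
  rw [hGW, add_mul, one_mul, gw_mul, neg_one_mul]
  exact gw_add_gw_neg a

theorem wq_surjective : Function.Surjective (wq F) :=
  Ideal.Quotient.mk_surjective

theorem wq_hGW : wq F (hGW F) = 0 :=
  Ideal.Quotient.eq_zero_iff_mem.mpr (Ideal.mem_span_singleton_self _)

namespace GW

def rank : GW F →+* ℤ := lift (F := F) 1 (fun _ ↦ rfl) (fun _ ↦ rfl) (fun _ _ _ ↦ rfl)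

@[simp]
theorem rank_gw (a : Fˣ) : rank (gw a) = 1 := lift_gw a

theorem rank_hGW : rank (hGW F) = 2 := by
  simp [hGW]

theorem hGW_mul (x : GW F) : hGW F * x = rank x • hGW F := by
  have hx : x ∈ Subring.closure (Set.range (gw (F := F))) := by
    rw [closure_range_gw]; trivial
  induction hx using Subring.closure_induction with
  | mem _ h => obtain ⟨a, rfl⟩ := h; rw [hGW_mul_gw, rank_gw, one_smul]
  | zero => simp
  | one => simp
  | add x y _ _ hx hy => rw [mul_add, hx, hy, map_add, add_smul]
  | neg x _ hx => rw [mul_neg, hx, map_neg, neg_smul]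
  | mul x y _ _ hx hy => rw [← mul_assoc, hx, smul_mul_assoc, hy, map_mul, mul_smul]

theorem eq_of_wq_eq_of_rank_eq {x y : GW F} (hW : wq F x = wq F y) (hrank : rank x = rank y) :
    x = y := by
  obtain ⟨c, hc⟩ := Ideal.mem_span_singleton'.mp (Ideal.Quotient.eq.mp hW)
  rw [mul_comm, hGW_mul] at hc
  have hc0 : rank c = 0 := by
    have := congrArg rank hc
    rw [map_zsmul, rank_hGW, map_sub, hrank, sub_self, smul_eq_mul] at this
    omega
  rwa [hc0, zero_smul, eq_comm, sub_eq_zero] at hc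

end GW

-- `MvPolynomial.eval₂Hom` needs a commutative target, so `φ₀` is built into this subring first.
variable (F) in
def mwFormSubring : Subring (KMW F) := Subring.closure (Set.range (mwForm F))

instance : IsMulCommutative (mwFormSubring F) :=
  Subring.isMulCommutative_closure <| by
    rintro _ ⟨a, rfl⟩ _ ⟨b, rfl⟩
    rw [← map_mul, ← map_mul, mul_comm]

open scoped IsMulCommutative

def GW.toKMW : GW F →+* KMW F :=
  (mwFormSubring F).subtype.comp <| GW.lift
    ((mwForm F).codRestrict (mwFormSubring F).toSubmonoid fun a ↦ Subring.subset_closure ⟨a, rfl⟩)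
    (fun a ↦ Subtype.ext (mwForm_mul_self a))
    (fun a ↦ Subtype.ext (mwForm_add_mwForm_neg a))
    (fun u v h ↦ Subtype.ext <| (mwForm F).add_eq_of_sub_one_mul_sub_one_eq_zero mwForm_mul_self
      (fun _ _ ↦ mwForm_sub_one_mul_mwForm_sub_one) u v h)

theorem GW.toKMW_gw (a : Fˣ) : toKMW (gw a) = mwForm F a :=
  congrArg Subtype.val (lift_gw a)

theorem GW.toKMW_mem_mwFormSubring (x : GW F) : toKMW x ∈ mwFormSubring F :=
  Subtype.prop _

open LaurentPolynomial

namespace KMW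

def toLaurent : KMW F →+* LaurentPolynomial (WittRing F) :=
  lift (T (-1)) (fun a ↦ T 1 * C (wq F (gw a) - 1))
    (fun a b hab ↦ by
      rw [mul_mul_mul_comm, ← map_mul, ← map_one (wq F), ← map_sub, ← map_sub, ← map_mul,
        gw_sub_one_mul_gw_sub_one hab, map_zero, map_zero, mul_zero])
    (fun a b ↦ by
      simp only [← gw_mul, map_mul, map_sub, map_one]
      linear_combination (-(T 1 * (C (wq F (gw a)) - 1) * (C (wq F (gw b)) - 1))) *
        (T_neg_one_mul_T_one (R := WittRing F)))
    (fun _ ↦ mul_comm _ _)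
    (by
      have hC := congrArg C (wq_hGW (F := F))
      simp only [hGW, map_add, map_one, map_zero] at hC
      simp only [map_sub, map_one]
      linear_combination
        (T (-1) * (C (wq F (gw (-1 : Fˣ))) - 1)) * (T_neg_one_mul_T_one (R := WittRing F)) +
          T (-1) * hC)

@[simp]
theorem toLaurent_mw (a : Fˣ) : toLaurent (mw a) = T 1 * C (wq F (gw a) - 1) := lift_mw a

@[simp]
theorem toLaurent_mweta : toLaurent (mweta F) = T (-1) := lift_mweta

theorem toLaurent_mwForm (a : Fˣ) : toLaurent (mwForm F a) = C (wq F (gw a)) := by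
  rw [mwForm_apply, map_add, map_mul, map_one, toLaurent_mw, toLaurent_mweta, ← mul_assoc,
    T_neg_one_mul_T_one, one_mul, map_sub, map_one, add_sub_cancel]

theorem toLaurent_toKMW (x : GW F) : toLaurent (GW.toKMW x) = C (wq F x) :=
  RingHom.congr_fun (f := toLaurent.comp GW.toKMW) (g := C.comp (wq F))
    (GW.ringHom_ext fun a ↦ (congrArg _ (GW.toKMW_gw a)).trans (toLaurent_mwForm a)) x

def augmentation : KMW F →+* ℤ :=
  lift 0 0 (fun _ _ _ ↦ mul_zero 0) (fun _ _ ↦ by simp) (fun _ ↦ rfl) (by simp)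

theorem augmentation_toKMW (x : GW F) : augmentation (GW.toKMW x) = GW.rank x :=
  RingHom.congr_fun (f := augmentation.comp GW.toKMW) (g := GW.rank)
    (GW.ringHom_ext fun a ↦ by simp [GW.toKMW_gw, mwForm_apply, augmentation]) x

end KMW

theorem GW.toKMW_injective : Function.Injective (toKMW (F := F)) := fun x y hxy ↦
  eq_of_wq_eq_of_rank_eq
    (C_injective (by rw [← KMW.toLaurent_toKMW, ← KMW.toLaurent_toKMW, hxy]))
    (by rw [← KMW.augmentation_toKMW, ← KMW.augmentation_toKMW, hxy])

def mwMonomial (m : ℕ) {r : ℕ} (v : Fin r → Fˣ) : KMW F :=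
  mweta F ^ m * (List.ofFn fun i ↦ mw (v i)).prod

theorem mweta_pow_mul_comm (n : ℕ) (x : KMW F) : mweta F ^ n * x = x * mweta F ^ n :=
  ((commute_mweta x).pow_left n).eq

theorem mwMonomial_mem_KMWcomp (m : ℕ) {r : ℕ} (v : Fin r → Fˣ) :
    mwMonomial m v ∈ KMWcomp F (r - m) :=
  AddSubgroup.subset_closure ⟨m, r, v, rfl, rfl⟩

theorem mwMonomial_mul_mweta_pow (m : ℕ) {r : ℕ} (v : Fin r → Fˣ) (n : ℕ) :
    mwMonomial m v * mweta F ^ n = mwMonomial (m + n) v := by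
  unfold mwMonomial
  rw [mul_assoc, ← mweta_pow_mul_comm, ← mul_assoc, pow_add]

theorem mwMonomial_mul_mwMonomial (m : ℕ) {r : ℕ} (v : Fin r → Fˣ) (m' : ℕ) {r' : ℕ}
    (v' : Fin r' → Fˣ) :
    mwMonomial m v * mwMonomial m' v' = mwMonomial (m + m') (Fin.append v v') := by
  unfold mwMonomial
  rw [mul_assoc, ← mul_assoc _ (mweta F ^ m'), ← mweta_pow_mul_comm, mul_assoc, ← mul_assoc,
    ← pow_add, ← List.prod_append, List.ofFn_add]
  simp [Fin.append_right]

theorem KMWcomp_mul_mem {p q : ℤ} {a b : KMW F} (ha : a ∈ KMWcomp F p) (hb : b ∈ KMWcomp F q) :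
    a * b ∈ KMWcomp F (p + q) := by
  induction hb using AddSubgroup.closure_induction with
  | mem b hb =>
    obtain ⟨m', r', v', rfl, rfl⟩ := hb
    induction ha using AddSubgroup.closure_induction with
    | mem a ha =>
      obtain ⟨m, r, v, rfl, rfl⟩ := ha
      change mwMonomial m v * mwMonomial m' v' ∈ _
      rw [mwMonomial_mul_mwMonomial]
      convert mwMonomial_mem_KMWcomp (m + m') (Fin.append v v') using 2
      push_cast; ring
    | zero => rw [zero_mul]; exact zero_mem _
    | add _ _ _ _ ha hb => rw [add_mul]; exact add_mem ha hb
    | neg _ _ ha => rw [neg_mul]; exact neg_mem ha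
  | zero => rw [mul_zero]; exact zero_mem _
  | add _ _ _ _ ha hb => rw [mul_add]; exact add_mem ha hb
  | neg _ _ ha => rw [mul_neg]; exact neg_mem ha

theorem mweta_pow_mem_KMWcomp (n : ℕ) : mweta F ^ n ∈ KMWcomp F (-n) := by
  simpa [mwMonomial] using mwMonomial_mem_KMWcomp (F := F) n Fin.elim0

theorem mwForm_mem_KMWcomp_zero (a : Fˣ) : mwForm F a ∈ KMWcomp F 0 := by
  simpa [mwMonomial, mwForm_apply] using add_mem (mwMonomial_mem_KMWcomp (F := F) 0 Fin.elim0)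
    (mwMonomial_mem_KMWcomp 1 ![a])

theorem GW.toKMW_mem_KMWcomp_zero (x : GW F) : toKMW x ∈ KMWcomp F 0 := by
  suffices h : ∀ y ∈ mwFormSubring F, y ∈ KMWcomp F 0 from h _ (toKMW_mem_mwFormSubring x)
  intro y hy
  induction hy using Subring.closure_induction with
  | mem _ h => obtain ⟨a, rfl⟩ := h; exact mwForm_mem_KMWcomp_zero a
  | zero => exact zero_mem _
  | one => exact map_one (mwForm F) ▸ mwForm_mem_KMWcomp_zero 1
  | add _ _ _ _ ha hb => exact add_mem ha hb
  | neg _ _ ha => exact neg_mem ha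
  | mul _ _ _ _ ha hb => simpa using KMWcomp_mul_mem ha hb

theorem GW.toKMW_mul_mweta_pow_mem (x : GW F) (n : ℕ) :
    toKMW x * mweta F ^ n ∈ KMWcomp F (-n) := by
  simpa using KMWcomp_mul_mem (toKMW_mem_KMWcomp_zero x) (mweta_pow_mem_KMWcomp n)

theorem GW.toKMW_prod_gw_sub_one {r : ℕ} (v : Fin r → Fˣ) :
    toKMW (List.ofFn fun i ↦ gw (v i) - 1).prod = mwMonomial r v := by
  induction r with
  | zero => simp [mwMonomial]
  | succ r ih =>
    rw [List.ofFn_succ, List.prod_cons, map_mul, ih (fun i ↦ v i.succ), map_sub, map_one, toKMW_gw,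
      mwForm_apply, add_sub_cancel_left]
    unfold mwMonomial
    rw [List.ofFn_succ, List.prod_cons, mul_assoc, ← mul_assoc (mw (v 0)), ← mweta_pow_mul_comm,
      ← mul_assoc, ← mul_assoc, ← pow_succ', mul_assoc]

theorem GW.exists_toKMW_mul_mweta_pow_eq {n : ℕ} {y : KMW F} (hy : y ∈ KMWcomp F (-n)) :
    ∃ x, toKMW x * mweta F ^ n = y := by
  induction hy using AddSubgroup.closure_induction with
  | mem _ hy =>
    obtain ⟨m, r, v, hrm, rfl⟩ := hy
    obtain rfl : m = r + n := by omega
    exact ⟨(List.ofFn fun i ↦ gw (v i) - 1).prod, by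
      rw [toKMW_prod_gw_sub_one, mwMonomial_mul_mweta_pow, mwMonomial]⟩
  | zero => exact ⟨0, by simp⟩
  | add _ _ _ _ ha hb =>
    obtain ⟨a, rfl⟩ := ha
    obtain ⟨b, rfl⟩ := hb
    exact ⟨a + b, by rw [map_add, add_mul]⟩
  | neg _ _ ha =>
    obtain ⟨a, rfl⟩ := ha
    exact ⟨-a, by rw [map_neg, neg_mul]⟩

theorem GW.toKMW_hGW_mul_mweta : toKMW (hGW F) * mweta F = 0 := by
  rw [hGW, map_add, map_one, toKMW_gw, one_add_mwForm_neg_one_mul_mweta]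

theorem KMW.toLaurent_toKMW_mul_mweta_pow (x : GW F) (n : ℕ) :
    toLaurent (GW.toKMW x * mweta F ^ n) = C (wq F x) * T (-n) := by
  rw [map_mul, map_pow, toLaurent_toKMW, toLaurent_mweta, T_pow, mul_neg_one]

def WittRing.toKMW (n : ℕ) (hn : 1 ≤ n) : WittRing F →+ KMW F :=
  QuotientAddGroup.lift (Ideal.span {hGW F}).toAddSubgroup
    ((AddMonoidHom.mulRight (mweta F ^ n)).comp GW.toKMW.toAddMonoidHom) fun x hx ↦ by
      obtain ⟨c, rfl⟩ := Ideal.mem_span_singleton'.mp hx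
      obtain ⟨k, rfl⟩ := Nat.exists_eq_add_of_le hn
      change GW.toKMW (c * hGW F) * mweta F ^ (1 + k) = 0
      rw [map_mul, pow_add, pow_one, mul_assoc, ← mul_assoc _ (mweta F), GW.toKMW_hGW_mul_mweta,
        zero_mul, mul_zero]

theorem WittRing.toKMW_wq (n : ℕ) (hn : 1 ≤ n) (x : GW F) :
    toKMW n hn (wq F x) = GW.toKMW x * mweta F ^ n :=
  rfl

theorem WittRing.toKMW_injective (n : ℕ) (hn : 1 ≤ n) :
    Function.Injective (toKMW (F := F) n hn) := by
  intro a b hab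
  obtain ⟨x, rfl⟩ := wq_surjective a
  obtain ⟨y, rfl⟩ := wq_surjective b
  have h := congrArg KMW.toLaurent hab
  rw [toKMW_wq, toKMW_wq, KMW.toLaurent_toKMW_mul_mweta_pow,
    KMW.toLaurent_toKMW_mul_mweta_pow] at h
  exact C_injective ((isUnit_T _).mul_left_injective h)

theorem stmt13 (F : Type) [Field F] :
    (∃ φ₀ : GW F →+* KMW F,
      (∀ u : Fˣ, φ₀ (gw u) = 1 + mweta F * mw u) ∧
      Function.Injective φ₀ ∧
      (∀ x : GW F, φ₀ x ∈ KMWcomp F 0) ∧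
      (∀ y ∈ KMWcomp F 0, ∃ x : GW F, φ₀ x = y)) ∧
    ∀ n : ℕ, 1 ≤ n →
      ∃ φ : WittRing F →+ KMW F,
        (∀ u : Fˣ, φ (wq F (gw u)) = (mweta F) ^ n * (1 + mweta F * mw u)) ∧
        Function.Injective φ ∧
        (∀ x : WittRing F, φ x ∈ KMWcomp F (-(n : ℤ))) ∧
        (∀ y ∈ KMWcomp F (-(n : ℤ)), ∃ x : WittRing F, φ x = y) := by
  refine ⟨⟨GW.toKMW, GW.toKMW_gw, GW.toKMW_injective, GW.toKMW_mem_KMWcomp_zero, fun y hy ↦ ?_⟩,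
    fun n hn ↦ ⟨WittRing.toKMW n hn, fun u ↦ ?_, WittRing.toKMW_injective n hn, fun x ↦ ?_,
      fun y hy ↦ ?_⟩⟩
  · simpa using GW.exists_toKMW_mul_mweta_pow_eq (n := 0) (by simpa using hy)
  · rw [WittRing.toKMW_wq, GW.toKMW_gw, mweta_pow_mul_comm, mwForm_apply]
  · obtain ⟨x, rfl⟩ := wq_surjective x
    exact GW.toKMW_mul_mweta_pow_mem x n
  · obtain ⟨x, hx⟩ := GW.exists_toKMW_mul_mweta_pow_eq hy
    exact ⟨wq F x, hx⟩
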